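/- arXiv:2303.01163 — 3 statements merged into one kernel-verified Lean document; each statement's English description precedes it below -/
import Mathlib

section
/- The union of all holes equals the fine mesh with the skeleton removed: ⋃_{i=0}^{N_c^x} ⋃_{j=0}^{N_c^y} Ω_{i,j} = Ω^{h_x,h_y} \ (Ω^{h_x,H_y} ∪ Ω^{H_x,h_y}). -/
/-- The uniform 2D mesh with `a` interior points of step `dx` along the x-axis and
`b` interior points of step `dy` along the y-axis. -/
def mesh2D (a b : ℕ) (dx dy : ℝ) : Set (ℝ × ℝ) :=
  {p | ∃ i j : ℕ, 1 ≤ i ∧ i ≤ a ∧ 1 ≤ j ∧ j ≤ b ∧ p = ((i : ℝ) * dx, (j : ℝ) * dy)}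

/-- The hole `Ω_{i,j}` of the splitting with parameters `nx, ny` and step lengths
`hx, hy` (fine) and `Hx, Hy` (coarse). -/
def hole2D (nx ny : ℕ) (hx hy Hx Hy : ℝ) (i j : ℕ) : Set (ℝ × ℝ) :=
  {p | ∃ k l : ℕ, 1 ≤ k ∧ k ≤ nx - 1 ∧ 1 ≤ l ∧ l ≤ ny - 1 ∧
    p = ((i : ℝ) * Hx + (k : ℝ) * hx, (j : ℝ) * Hy + (l : ℝ) * hy)}

lemma no_skel (j j' l n : ℕ) (h1 : 1 ≤ l) (h2 : l ≤ n - 1) (h : j * n + l = j' * n) : False := by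
  have e1 : (j * n + l) % n = l % n := by rw [Nat.mul_comm j n]; exact Nat.mul_add_mod n j l
  have e2 : j' * n % n = 0 := Nat.mul_mod_left j' n
  have e3 : l % n = 0 := by rw [← e1, h, e2]
  rw [Nat.mod_eq_of_lt (by omega)] at e3
  omega

theorem holes_eq_fine_sdiff_skeleton (Ncx Ncy Nfx Nfy nx ny : ℕ)
    (hNcx : 0 < Ncx) (hNcy : 0 < Ncy) (hNfx : 0 < Nfx) (hNfy : 0 < Nfy)
    (hnx : 0 < nx) (hny : 0 < ny)
    (hcondx : Nfx + 1 = nx * (Ncx + 1)) (hcondy : Nfy + 1 = ny * (Ncy + 1)) :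
    (⋃ i ≤ Ncx, ⋃ j ≤ Ncy,
        hole2D nx ny (1 / (Nfx + 1 : ℝ)) (1 / (Nfy + 1 : ℝ))
          (1 / (Ncx + 1 : ℝ)) (1 / (Ncy + 1 : ℝ)) i j) =
      mesh2D Nfx Nfy (1 / (Nfx + 1 : ℝ)) (1 / (Nfy + 1 : ℝ)) \
        (mesh2D Nfx Ncy (1 / (Nfx + 1 : ℝ)) (1 / (Ncy + 1 : ℝ)) ∪
          mesh2D Ncx Nfy (1 / (Ncx + 1 : ℝ)) (1 / (Nfy + 1 : ℝ))) := by
  have hxpos : (0:ℝ) < 1 / (Nfx + 1 : ℝ) := by positivity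
  have hypos : (0:ℝ) < 1 / (Nfy + 1 : ℝ) := by positivity
  have hxne : (1 / (Nfx + 1 : ℝ)) ≠ 0 := ne_of_gt hxpos
  have hyne : (1 / (Nfy + 1 : ℝ)) ≠ 0 := ne_of_gt hypos
  have hnx0 : ((nx : ℝ)) ≠ 0 := by positivity
  have hny0 : ((ny : ℝ)) ≠ 0 := by positivity
  have hcastx : ((Nfx : ℝ) + 1) = (nx : ℝ) * ((Ncx : ℝ) + 1) := by exact_mod_cast hcondx
  have hcasty : ((Nfy : ℝ) + 1) = (ny : ℝ) * ((Ncy : ℝ) + 1) := by exact_mod_cast hcondy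
  have hcx : (1 / (Ncx + 1 : ℝ)) = (nx : ℝ) * (1 / (Nfx + 1 : ℝ)) := by
    rw [hcastx]; field_simp
  have hcy : (1 / (Ncy + 1 : ℝ)) = (ny : ℝ) * (1 / (Nfy + 1 : ℝ)) := by
    rw [hcasty]; field_simp
  have hcanx : ∀ a b : ℕ, (a:ℝ) * (1 / (Nfx + 1 : ℝ)) = (b:ℝ) * (1 / (Nfx + 1 : ℝ)) → a = b :=
    fun a b h => Nat.cast_injective (mul_right_cancel₀ hxne h)
  have hcany : ∀ a b : ℕ, (a:ℝ) * (1 / (Nfy + 1 : ℝ)) = (b:ℝ) * (1 / (Nfy + 1 : ℝ)) → a = b :=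
    fun a b h => Nat.cast_injective (mul_right_cancel₀ hyne h)
  ext ⟨x, y⟩
  simp only [Set.mem_iUnion, Set.mem_diff, Set.mem_union, mesh2D, hole2D, Set.mem_setOf_eq,
    Prod.mk.injEq]
  constructor
  · rintro ⟨i, hi, j, hj, k, l, hk1, hk2, hl1, hl2, hxeq, hyeq⟩
    have hnx2 : 2 ≤ nx := by omega
    have hny2 : 2 ≤ ny := by omega
    have hxI : x = ((i * nx + k : ℕ) : ℝ) * (1/(Nfx+1:ℝ)) := by
      rw [hxeq, hcx]; push_cast; ring
    have hyJ : y = ((j * ny + l : ℕ) : ℝ) * (1/(Nfy+1:ℝ)) := by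
      rw [hyeq, hcy]; push_cast; ring
    have hIle : i * nx + k ≤ Nfx := by
      have h1 : i * nx ≤ Ncx * nx := Nat.mul_le_mul_right _ hi
      have h2 : nx * (Ncx + 1) = Ncx * nx + nx := by ring
      omega
    have hJle : j * ny + l ≤ Nfy := by
      have h1 : j * ny ≤ Ncy * ny := Nat.mul_le_mul_right _ hj
      have h2 : ny * (Ncy + 1) = Ncy * ny + ny := by ring
      omega
    refine ⟨⟨i * nx + k, j * ny + l, by omega, hIle, by omega, hJle, hxI, hyJ⟩, ?_⟩
    rintro (⟨i', j', hi'1, hi'2, hj'1, hj'2, hx', hy'⟩ | ⟨i', j', hi'1, hi'2, hj'1, hj'2, hx', hy'⟩)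
    · -- y = j' * Hy
      have : ((j * ny + l : ℕ) : ℝ) * (1/(Nfy+1:ℝ)) = ((j' * ny : ℕ) : ℝ) * (1/(Nfy+1:ℝ)) := by
        rw [← hyJ, hy', hcy]; push_cast; ring
      exact no_skel j j' l ny hl1 hl2 (hcany _ _ this)
    · have : ((i * nx + k : ℕ) : ℝ) * (1/(Nfx+1:ℝ)) = ((i' * nx : ℕ) : ℝ) * (1/(Nfx+1:ℝ)) := by
        rw [← hxI, hx', hcx]; push_cast; ring
      exact no_skel i i' k nx hk1 hk2 (hcanx _ _ this)
  · rintro ⟨⟨I, J, hI1, hI2, hJ1, hJ2, hxeq, hyeq⟩, hnot⟩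
    rw [not_or] at hnot
    obtain ⟨hnA, hnB⟩ := hnot
    have hIlt : I < (Ncx + 1) * nx := by
      have : I < Nfx + 1 := by omega
      rw [hcondx, Nat.mul_comm] at this; exact this
    have hJlt : J < (Ncy + 1) * ny := by
      have : J < Nfy + 1 := by omega
      rw [hcondy, Nat.mul_comm] at this; exact this
    have hiq : I / nx ≤ Ncx := by
      have := (Nat.div_lt_iff_lt_mul hnx).mpr hIlt; omega
    have hjq : J / ny ≤ Ncy := by
      have := (Nat.div_lt_iff_lt_mul hny).mpr hJlt; omega
    have hkne : I % nx ≠ 0 := by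
      intro h0
      have hd : I / nx * nx = I := Nat.div_mul_cancel (Nat.dvd_of_mod_eq_zero h0)
      have hq1 : 1 ≤ I / nx :=
        (Nat.one_le_div_iff hnx).mpr (Nat.le_of_dvd (by omega) (Nat.dvd_of_mod_eq_zero h0))
      have hdc : ((I:ℝ)) = ((I / nx : ℕ) : ℝ) * (nx : ℝ) := by exact_mod_cast hd.symm
      exact hnB ⟨I / nx, J, hq1, hiq, hJ1, hJ2, by rw [hxeq, hcx, hdc]; ring, hyeq⟩
    have hlne : J % ny ≠ 0 := by
      intro h0
      have hd : J / ny * ny = J := Nat.div_mul_cancel (Nat.dvd_of_mod_eq_zero h0)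
      have hq1 : 1 ≤ J / ny :=
        (Nat.one_le_div_iff hny).mpr (Nat.le_of_dvd (by omega) (Nat.dvd_of_mod_eq_zero h0))
      have hdc : ((J:ℝ)) = ((J / ny : ℕ) : ℝ) * (ny : ℝ) := by exact_mod_cast hd.symm
      exact hnA ⟨I, J / ny, hI1, hI2, hq1, hjq, hxeq, by rw [hyeq, hcy, hdc]; ring⟩
    have hkx : I % nx < nx := Nat.mod_lt _ hnx
    have hly : J % ny < ny := Nat.mod_lt _ hny
    have hdivx := Nat.div_add_mod I nx
    have hdivy := Nat.div_add_mod J ny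
    refine ⟨I / nx, hiq, J / ny, hjq, I % nx, J % ny, by omega, by omega, by omega, by omega,
      ?_, ?_⟩
    · have hdc : ((I:ℝ)) = (nx:ℝ) * ((I / nx : ℕ):ℝ) + ((I % nx : ℕ):ℝ) := by
        exact_mod_cast hdivx.symm
      rw [hxeq, hcx, hdc]; ring
    · have hdc : ((J:ℝ)) = (ny:ℝ) * ((J / ny : ℕ):ℝ) + ((J % ny : ℕ):ℝ) := by
        exact_mod_cast hdivy.symm
      rw [hyeq, hcy, hdc]; ring
end

section
/- The fine mesh is the union of all the holes together with the two anisotropic meshes: Ω^{h_x,h_y} = (⋃_{i=0}^{N_c^x} ⋃_{j=0}^{N_c^y} Ω_{i,j}) ∪ Ω^{h_x,H_y} ∪ Ω^{H_x,h_y}. -/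
lemma step_eq (Nc Nf n : ℕ) (hcond : Nf + 1 = n * (Nc + 1)) :
    (1 : ℝ) / (Nc + 1) = (n : ℝ) * (1 / (Nf + 1)) := by
  have h : (Nf + 1 : ℝ) = (n : ℝ) * (Nc + 1) := by exact_mod_cast congrArg (Nat.cast (R := ℝ)) hcond
  have h1 : (Nc + 1 : ℝ) ≠ 0 := by positivity
  have h2 : (Nf + 1 : ℝ) ≠ 0 := by positivity
  field_simp
  linarith [h]

theorem fine_eq_holes_union_skeleton (Ncx Ncy Nfx Nfy nx ny : ℕ)
    (hNcx : 0 < Ncx) (hNcy : 0 < Ncy) (hNfx : 0 < Nfx) (hNfy : 0 < Nfy)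
    (hnx : 0 < nx) (hny : 0 < ny)
    (hcondx : Nfx + 1 = nx * (Ncx + 1)) (hcondy : Nfy + 1 = ny * (Ncy + 1)) :
    mesh2D Nfx Nfy (1 / (Nfx + 1 : ℝ)) (1 / (Nfy + 1 : ℝ)) =
      (⋃ i ≤ Ncx, ⋃ j ≤ Ncy,
          hole2D nx ny (1 / (Nfx + 1 : ℝ)) (1 / (Nfy + 1 : ℝ))
            (1 / (Ncx + 1 : ℝ)) (1 / (Ncy + 1 : ℝ)) i j) ∪
        mesh2D Nfx Ncy (1 / (Nfx + 1 : ℝ)) (1 / (Ncy + 1 : ℝ)) ∪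
        mesh2D Ncx Nfy (1 / (Ncx + 1 : ℝ)) (1 / (Nfy + 1 : ℝ)) := by
  set hx : ℝ := 1 / (Nfx + 1 : ℝ) with hhx
  set hy : ℝ := 1 / (Nfy + 1 : ℝ) with hhy
  set Hx : ℝ := 1 / (Ncx + 1 : ℝ) with hHx0
  set Hy : ℝ := 1 / (Ncy + 1 : ℝ) with hHy0
  have hHx : Hx = (nx : ℝ) * hx := step_eq Ncx Nfx nx hcondx
  have hHy : Hy = (ny : ℝ) * hy := step_eq Ncy Nfy ny hcondy
  ext p
  simp only [Set.mem_union, Set.mem_iUnion, mesh2D, hole2D, Set.mem_setOf_eq]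
  constructor
  · rintro ⟨i, j, hi1, hi2, hj1, hj2, rfl⟩
    by_cases hdy : ny ∣ j
    · -- j divisible by ny : anisotropic mesh Ω^{hx,Hy}
      left; right
      refine ⟨i, j / ny, hi1, hi2, ?_, ?_, ?_⟩
      · exact Nat.one_le_div_iff hny |>.mpr (Nat.le_of_dvd (by omega) hdy)
      · have h3 : j < ny * (Ncy + 1) := by omega
        have := Nat.div_lt_of_lt_mul h3
        omega
      · have hj : j = ny * (j / ny) := (Nat.mul_div_cancel' hdy).symm
        have : (j : ℝ) = (ny : ℝ) * (j / ny : ℕ) := by exact_mod_cast congrArg (Nat.cast (R := ℝ)) hj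
        rw [hHy]; rw [this]; ring_nf
    · by_cases hdx : nx ∣ i
      · -- i divisible by nx : anisotropic mesh Ω^{Hx,hy}
        right
        refine ⟨i / nx, j, ?_, ?_, hj1, hj2, ?_⟩
        · exact Nat.one_le_div_iff hnx |>.mpr (Nat.le_of_dvd (by omega) hdx)
        · have h3 : i < nx * (Ncx + 1) := by omega
          have := Nat.div_lt_of_lt_mul h3
          omega
        · have hi : i = nx * (i / nx) := (Nat.mul_div_cancel' hdx).symm
          have : (i : ℝ) = (nx : ℝ) * (i / nx : ℕ) := by exact_mod_cast congrArg (Nat.cast (R := ℝ)) hi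
          rw [hHx]; rw [this]; ring_nf
      · -- hole
        left; left
        have hix : i = nx * (i / nx) + i % nx := (Nat.div_add_mod i nx).symm
        have hjy : j = ny * (j / ny) + j % ny := (Nat.div_add_mod j ny).symm
        have hibd : i / nx ≤ Ncx := by
          have h3 : i < nx * (Ncx + 1) := by omega
          have := Nat.div_lt_of_lt_mul h3
          omega
        have hjbd : j / ny ≤ Ncy := by
          have h3 : j < ny * (Ncy + 1) := by omega
          have := Nat.div_lt_of_lt_mul h3
          omega
        refine ⟨i / nx, hibd, j / ny, hjbd, i % nx, j % ny, ?_, ?_, ?_, ?_, ?_⟩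
        · have := Nat.mod_lt i hnx
          rcases Nat.eq_zero_or_pos (i % nx) with h | h
          · exact absurd (Nat.dvd_of_mod_eq_zero h) hdx
          · omega
        · have := Nat.mod_lt i hnx; omega
        · rcases Nat.eq_zero_or_pos (j % ny) with h | h
          · exact absurd (Nat.dvd_of_mod_eq_zero h) hdy
          · omega
        · have := Nat.mod_lt j hny; omega
        · have h1 : (i : ℝ) = (nx : ℝ) * (i / nx : ℕ) + (i % nx : ℕ) := by
            exact_mod_cast congrArg (Nat.cast (R := ℝ)) hix
          have h2 : (j : ℝ) = (ny : ℝ) * (j / ny : ℕ) + (j % ny : ℕ) := by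
            exact_mod_cast congrArg (Nat.cast (R := ℝ)) hjy
          rw [hHx, hHy, h1, h2]; ring_nf
  · rintro ((h | ⟨i, j, hi1, hi2, hj1, hj2, rfl⟩) | ⟨i, j, hi1, hi2, hj1, hj2, rfl⟩)
    · -- from holes
      obtain ⟨i, hi, j, hj, k, l, hk1, hk2, hl1, hl2, rfl⟩ := h
      have hnx2 : 2 ≤ nx := by omega
      have hny2 : 2 ≤ ny := by omega
      refine ⟨i * nx + k, j * ny + l, by omega, ?_, by omega, ?_, ?_⟩
      · have e : nx * (Ncx + 1) = Ncx * nx + nx := by ring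
        have := Nat.mul_le_mul_right nx hi
        omega
      · have e : ny * (Ncy + 1) = Ncy * ny + ny := by ring
        have := Nat.mul_le_mul_right ny hj
        omega
      · have h1 : ((i * nx + k : ℕ) : ℝ) = (i : ℝ) * nx + k := by push_cast; ring
        have h2 : ((j * ny + l : ℕ) : ℝ) = (j : ℝ) * ny + l := by push_cast; ring
        rw [h1, h2, hHx, hHy]; ring_nf
    · -- from Ω^{hx,Hy}
      refine ⟨i, j * ny, hi1, hi2, Nat.mul_pos hj1 hny, ?_, ?_⟩
      · have e : ny * (Ncy + 1) = Ncy * ny + ny := by ring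
        have := Nat.mul_le_mul_right ny hj2; omega
      · have h2 : ((j * ny : ℕ) : ℝ) = (j : ℝ) * ny := by push_cast; ring
        rw [h2, hHy]; ring_nf
    · -- from Ω^{Hx,hy}
      refine ⟨i * nx, j, Nat.mul_pos hi1 hnx, ?_, hj1, hj2, ?_⟩
      · have e : nx * (Ncx + 1) = Ncx * nx + nx := by ring
        have := Nat.mul_le_mul_right nx hi2; omega
      · have h1 : ((i * nx : ℕ) : ℝ) = (i : ℝ) * nx := by push_cast; ring
        rw [h1, hHx]; ring_nf
end

section
/- (The Filler reproduces the exact solution iff the skeleton is exact.) Let A be an n × n real matrix, P an m × n real matrix with P·Pᵀ = I and P·A·Pᵀ invertible, b ∈ ℝⁿ, and u_ff ∈ ℝⁿ with A·u_ff = b. Let ũ ∈ ℝⁿ satisfy P·ũ = 0 (the skeleton guess is zero over the holes), and define u₀ = ũ + Pᵀ·(P·A·Pᵀ)⁻¹·(P·b − P·A·ũ). Then u₀ = u_ff if and only if ũ = (I − Pᵀ·P)·u_ff. -/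
open Matrix

theorem filler_exact_iff_skeleton_exact {m n : ℕ}
    (A : Matrix (Fin n) (Fin n) ℝ) (P : Matrix (Fin m) (Fin n) ℝ)
    (hP : P * Pᵀ = 1) (hinv : IsUnit (P * A * Pᵀ))
    (b uff : Fin n → ℝ) (huff : A *ᵥ uff = b)
    (ut : Fin n → ℝ) (hut : P *ᵥ ut = 0)
    (u₀ : Fin n → ℝ)
    (hu₀ : u₀ = ut + Pᵀ *ᵥ ((P * A * Pᵀ)⁻¹ *ᵥ (P *ᵥ b - P *ᵥ (A *ᵥ ut)))) :
    u₀ = uff ↔ ut = (1 - Pᵀ * P) *ᵥ uff := by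
  set M := P * A * Pᵀ with hM
  set w := P *ᵥ b - P *ᵥ (A *ᵥ ut) with hw
  have hdet : IsUnit M.det := (isUnit_iff_isUnit_det M).mp hinv
  constructor
  · intro h
    have hPuff : P *ᵥ uff = M⁻¹ *ᵥ w := by
      have : P *ᵥ uff = P *ᵥ (ut + Pᵀ *ᵥ (M⁻¹ *ᵥ w)) := by rw [← hu₀, h]
      rw [mulVec_add, hut, mulVec_mulVec, mulVec_mulVec, hP,
        Matrix.one_mul, zero_add] at this
      rw [this]
    have : ut = uff - Pᵀ *ᵥ (M⁻¹ *ᵥ w) := by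
      rw [← h, hu₀]; abel
    rw [this, ← hPuff, mulVec_mulVec, sub_mulVec, one_mulVec]
  · intro h
    have hdiff : uff - ut = (Pᵀ * P) *ᵥ uff := by
      rw [h, sub_mulVec, one_mulVec]; abel
    have hwM : w = M *ᵥ (P *ᵥ uff) := by
      rw [hw, ← huff, ← mulVec_sub, ← mulVec_sub A, hdiff]
      simp [mulVec_mulVec, hM, Matrix.mul_assoc]
    have hinvw : M⁻¹ *ᵥ w = P *ᵥ uff := by
      rw [hwM, mulVec_mulVec, Matrix.nonsing_inv_mul M hdet, one_mulVec]
    rw [hu₀, hinvw, h, mulVec_mulVec, sub_mulVec, one_mulVec]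
    abel
end
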